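/- arXiv:1702.06614 — 7 statements merged into one kernel-verified Lean document; each statement's English description precedes it below -/
import Mathlib

section
/- If G is the digraph whose vertices are v₁, …, v_{n-1}, v_n where (v_i, v_{i+1}) is an edge for 1 ≤ i ≤ n-2 (a directed path on n-1 vertices), the transitive closure edges (v_i, v_j) for i < j ≤ n-1 are also edges, and v_n is isolated (non-adjacent to all others), then any satisfying utility function for thresholds (t₁, t₂) with t₁ > 0 must have t₂ ≥ t₁·(n-2)/2. -/
/-- On vertex set `Fin n` (`n ≥ 3`), let the digraph consist of a transitively
closed directed path on the first `n - 1` vertices (edges `(i,j)` for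
`i < j < n - 1`, zero-indexed), with the last vertex isolated.  Any
satisfying utility function (edges: `α v - α u ≥ t₁`; non-adjacent pairs:
`|α v - α u| ≤ t₂`) for thresholds `(t₁, t₂)` with `t₁ > 0` must have
`t₂ ≥ t₁ * (n - 2) / 2`. -/
theorem chain_plus_isolated_ratio (n : ℕ) (hn : 3 ≤ n)
    (E : Fin n → Fin n → Prop)
    (hE : ∀ i j : Fin n, E i j ↔ (i : ℕ) < j ∧ (j : ℕ) < n - 1)
    (t₁ t₂ : ℝ) (ht₁ : 0 < t₁) (α : Fin n → ℝ)
    (hedge : ∀ u v, E u v → α v - α u ≥ t₁)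
    (hhop : ∀ u v, u ≠ v → ¬ E u v → ¬ E v u → |α v - α u| ≤ t₂) :
    t₂ ≥ t₁ * ((n : ℝ) - 2) / 2 := by
  have h0 : (0 : ℕ) < n := by omega
  have h2 : n - 2 < n := by omega
  have h1 : n - 1 < n := by omega
  -- telescoping
  have key : ∀ k : ℕ, (hk : k ≤ n - 2) → α ⟨k, by omega⟩ - α ⟨0, h0⟩ ≥ k * t₁ := by
    intro k
    induction k with
    | zero => intro _; simp
    | succ m ih =>
      intro hk
      have hm := ih (by omega)
      have hedge' : α ⟨m + 1, by omega⟩ - α ⟨m, by omega⟩ ≥ t₁ := by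
        apply hedge
        rw [hE]
        constructor <;> simp <;> omega
      push_cast
      linarith
  have hchain := key (n - 2) le_rfl
  -- isolated vertex n-1
  have hiso : ∀ j : Fin n, (j : ℕ) ≠ n - 1 → |α ⟨n - 1, h1⟩ - α j| ≤ t₂ := by
    intro j hj
    apply hhop
    · intro h; apply hj; rw [h]
    · rw [hE]; simp only [Fin.val_mk]; omega
    · rw [hE]; simp only [Fin.val_mk]; omega
  have ha := hiso ⟨0, h0⟩ (by simp; omega)
  have hb := hiso ⟨n - 2, h2⟩ (by simp; omega)
  have ha' := abs_le.mp ha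
  have hb' := abs_le.mp hb
  have hcast : ((n - 2 : ℕ) : ℝ) = (n : ℝ) - 2 := by
    have : (2 : ℕ) ≤ n := by omega
    push_cast [this]; ring
  rw [ge_iff_le, div_le_iff₀ (by norm_num)]
  rw [hcast] at hchain
  nlinarith [ha'.1, ha'.2, hb'.1, hb'.2]
end

section
/- If a digraph G has a satisfying utility function for thresholds (t₁, t₂) with t₂ < 2·t₁ and t₁ > 0, then G is transitive: whenever (u,v) and (v,w) are edges, (u,w) is also an edge. -/
/-- If a digraph has a satisfying utility function for `(t₁, t₂)` with
`0 < t₁` and `t₂ < 2·t₁`, then it is transitive. -/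
theorem satUtil_lt_two_transitive {V : Type*} (E : V → V → Prop) (t₁ t₂ : ℝ)
    (ht₁ : 0 < t₁) (ht₂ : t₂ < 2 * t₁) (α : V → ℝ)
    (hedge : ∀ u v, E u v → α v - α u ≥ t₁)
    (hhop : ∀ u v, u ≠ v → ¬ E u v → ¬ E v u → |α v - α u| ≤ t₂) :
    ∀ u v w, E u v → E v w → E u w := by
  intro u v w huv hvw
  have h1 := hedge u v huv
  have h2 := hedge v w hvw
  have hdiff : α w - α u ≥ 2 * t₁ := by linarith
  have hne : u ≠ w := by
    intro h; subst h; linarith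
  by_contra huw
  by_cases hwu : E w u
  · have := hedge w u hwu; linarith
  · have := hhop u w hne huw hwu
    rw [abs_le] at this
    linarith
end

section
/- Let σ be a k-clique extendable ordering of a graph G, and let X and Y be overlapping cliques of G each of size at least k, with |X ∩ Y| ≥ k - 1, such that in σ all elements of X \ Y precede all elements of X ∩ Y, which precede all elements of Y \ X. Then X ∪ Y is a clique. -/
/-- `σ`-ordering (given by a linear order on `V`) is a `k`-clique extendable
ordering of `G`: whenever `X` and `Y` are `k`-cliques with `|X ∩ Y| = k - 1`,
and in the ordering `X ∪ Y` begins with the element of `X \ Y` and ends with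
the element of `Y \ X`, then `X ∪ Y` is a clique. -/
def KCliqueExtendable {V : Type*} [LinearOrder V] [DecidableEq V]
    (G : SimpleGraph V) (k : ℕ) : Prop :=
  ∀ X Y : Finset V, X.card = k → Y.card = k →
    G.IsClique (X : Set V) → G.IsClique (Y : Set V) →
    (X ∩ Y).card = k - 1 →
    (∀ a ∈ X \ Y, ∀ x ∈ X ∪ Y, a ≠ x → a < x) →
    (∀ b ∈ Y \ X, ∀ x ∈ X ∪ Y, x ≠ b → x < b) →
    G.IsClique ((X ∪ Y : Finset V) : Set V)

/-- If `σ` is a `k`-clique extendable ordering and `X`, `Y` are overlapping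
cliques of size at least `k` with `|X ∩ Y| ≥ k - 1`, such that all of `X \ Y`
precedes all of `X ∩ Y`, which precedes all of `Y \ X`, then `X ∪ Y` is a
clique. -/
theorem kCliqueExtendable_union {V : Type*} [LinearOrder V] [DecidableEq V]
    (G : SimpleGraph V) (k : ℕ) (hk : 1 ≤ k)
    (hext : KCliqueExtendable G k)
    (X Y : Finset V)
    (hXcard : k ≤ X.card) (hYcard : k ≤ Y.card)
    (hX : G.IsClique (X : Set V)) (hY : G.IsClique (Y : Set V))
    (hover : (X ∩ Y).Nonempty ∧ ¬ X ⊆ Y ∧ ¬ Y ⊆ X)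
    (hint : k - 1 ≤ (X ∩ Y).card)
    (h₁ : ∀ a ∈ X \ Y, ∀ b ∈ X ∩ Y, a < b)
    (h₂ : ∀ b ∈ X ∩ Y, ∀ c ∈ Y \ X, b < c)
    (h₃ : ∀ a ∈ X \ Y, ∀ c ∈ Y \ X, a < c) :
    G.IsClique ((X ∪ Y : Finset V) : Set V) := by
  obtain ⟨S, hSsub, hScard⟩ := Finset.exists_subset_card_eq hint
  have key : ∀ a ∈ X \ Y, ∀ c ∈ Y \ X, G.Adj a c := by
    intro a ha c hc
    have haX := (Finset.mem_sdiff.mp ha).1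
    have haY := (Finset.mem_sdiff.mp ha).2
    have hcY := (Finset.mem_sdiff.mp hc).1
    have hcX := (Finset.mem_sdiff.mp hc).2
    have haS : a ∉ S := fun h => haY (Finset.mem_inter.mp (hSsub h)).2
    have hcS : c ∉ S := fun h => hcX (Finset.mem_inter.mp (hSsub h)).1
    have hac : a ≠ c := fun h => haY (h ▸ hcY)
    set X' := insert a S with hX'def
    set Y' := insert c S with hY'def
    have hX'sub : X' ⊆ X :=
      Finset.insert_subset haX (hSsub.trans Finset.inter_subset_left)
    have hY'sub : Y' ⊆ Y :=
      Finset.insert_subset hcY (hSsub.trans Finset.inter_subset_right)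
    have hX'card : X'.card = k := by
      rw [Finset.card_insert_of_notMem haS, hScard]; omega
    have hY'card : Y'.card = k := by
      rw [Finset.card_insert_of_notMem hcS, hScard]; omega
    have hinter : X' ∩ Y' = S := by
      ext x
      simp only [hX'def, hY'def, Finset.mem_inter, Finset.mem_insert]
      constructor
      · rintro ⟨(rfl | h), (rfl | h')⟩
        · exact absurd rfl hac
        · exact absurd h' haS
        · exact absurd h hcS
        · exact h
      · exact fun h => ⟨Or.inr h, Or.inr h⟩
    have hmemS : ∀ x ∈ S, x ∈ X ∩ Y := fun x hx => hSsub hx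
    have hord₁ : ∀ a' ∈ X' \ Y', ∀ x ∈ X' ∪ Y', a' ≠ x → a' < x := by
      intro a' ha' x hx hne
      have ha'2 := (Finset.mem_sdiff.mp ha').2
      rcases Finset.mem_insert.mp (Finset.mem_sdiff.mp ha').1 with rfl | hmem
      case inr => exact absurd (Finset.mem_insert_of_mem hmem) ha'2
      rcases Finset.mem_union.mp hx with h | h
      · rcases Finset.mem_insert.mp h with rfl | h
        · exact absurd rfl hne
        · exact h₁ a' ha x (hmemS x h)
      · rcases Finset.mem_insert.mp h with rfl | h
        · exact h₃ a' ha x hc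
        · exact h₁ a' ha x (hmemS x h)
    have hord₂ : ∀ b ∈ Y' \ X', ∀ x ∈ X' ∪ Y', x ≠ b → x < b := by
      intro b hb x hx hne
      have hb2 := (Finset.mem_sdiff.mp hb).2
      rcases Finset.mem_insert.mp (Finset.mem_sdiff.mp hb).1 with rfl | hmem
      case inr => exact absurd (Finset.mem_insert_of_mem hmem) hb2
      rcases Finset.mem_union.mp hx with h | h
      · rcases Finset.mem_insert.mp h with rfl | h
        · exact h₃ x ha b hc
        · exact h₂ x (hmemS x h) b hc
      · rcases Finset.mem_insert.mp h with rfl | h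
        · exact absurd rfl hne
        · exact h₂ x (hmemS x h) b hc
    have hclique := hext X' Y' hX'card hY'card
      (hX.subset (by exact_mod_cast hX'sub)) (hY.subset (by exact_mod_cast hY'sub))
      (by rw [hinter, hScard]) hord₁ hord₂
    exact hclique (by simp [hX'def]) (by simp [hY'def]) hac
  intro u hu v hv huv
  simp only [Finset.coe_union, Set.mem_union, Finset.mem_coe] at hu hv
  rcases hu with hu | hu <;> rcases hv with hv | hv
  · exact hX hu hv huv
  · by_cases huY : u ∈ Y
    · exact hY huY hv huv
    · by_cases hvX : v ∈ X
      · exact hX hu hvX huv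
      · exact key u (Finset.mem_sdiff.mpr ⟨hu, huY⟩) v (Finset.mem_sdiff.mpr ⟨hv, hvX⟩)
  · by_cases huX : u ∈ X
    · exact hX huX hv huv
    · by_cases hvY : v ∈ Y
      · exact hY hu hvY huv
      · exact (key v (Finset.mem_sdiff.mpr ⟨hv, hvY⟩) u (Finset.mem_sdiff.mpr ⟨hu, huX⟩)).symm
  · exact hY hu hv huv
end

section
/- Let σ be a k-clique extendable ordering of graph G, let X be a k-clique whose σ-largest element is v, and let Z be a clique of maximum size among cliques whose σ-largest k-1 elements are exactly X \ {v}. Then Z ∪ {v} is a clique, and it has maximum size among all cliques whose σ-largest k elements are exactly X. -/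
/-- `W` ends with `U` in the ordering: `U ⊆ W` and every element of `W \ U`
precedes every element of `U`. -/
def EndsWith {V : Type*} [LinearOrder V] [DecidableEq V] (W U : Finset V) : Prop :=
  U ⊆ W ∧ ∀ x ∈ W \ U, ∀ u ∈ U, x < u

/-- If `X` is a `k`-clique whose largest element is `v`, and `Z` is a largest
clique ending with `X \ {v}`, then `Z ∪ {v}` is a clique, and it is a largest
clique ending with `X`. -/
theorem largest_clique_ending_with {V : Type*} [LinearOrder V] [DecidableEq V]
    (G : SimpleGraph V) (k : ℕ) (hk : 1 ≤ k)
    (hext : KCliqueExtendable G k)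
    (X : Finset V) (hXcard : X.card = k) (hX : G.IsClique (X : Set V))
    (v : V) (hv : v ∈ X) (hvmax : ∀ x ∈ X, x ≠ v → x < v)
    (Z : Finset V) (hZ : G.IsClique (Z : Set V))
    (hZends : EndsWith Z (X.erase v))
    (hZmax : ∀ Z' : Finset V, G.IsClique (Z' : Set V) →
      EndsWith Z' (X.erase v) → Z'.card ≤ Z.card) :
    G.IsClique ((insert v Z : Finset V) : Set V) ∧
      ∀ Y : Finset V, G.IsClique (Y : Set V) → EndsWith Y X →
        Y.card ≤ (insert v Z).card := by
  have hXZ : X.erase v ⊆ Z := hZends.1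
  -- v is adjacent to every element of Z distinct from v
  have hadj : ∀ z ∈ Z, z ≠ v → G.Adj v z := by
    intro z hz hne
    by_cases hzX : z ∈ X
    · exact hX hv hzX (Ne.symm hne)
    · have hznE : z ∉ X.erase v := fun h => hzX (Finset.mem_of_mem_erase h)
      have hzE : z ∈ Z \ X.erase v := Finset.mem_sdiff.mpr ⟨hz, hznE⟩
      have hzlt : ∀ u ∈ X.erase v, z < u := fun u hu => hZends.2 z hzE u hu
      have hX1sub : insert z (X.erase v) ⊆ Z := by
        intro x hx
        rcases Finset.mem_insert.mp hx with rfl | hx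
        · exact hz
        · exact hXZ hx
      have hX1clique : G.IsClique ((insert z (X.erase v) : Finset V) : Set V) :=
        hZ.subset (by exact_mod_cast hX1sub)
      have hcard1 : (insert z (X.erase v)).card = k := by
        rw [Finset.card_insert_of_notMem hznE, Finset.card_erase_of_mem hv, hXcard]
        omega
      rcases lt_or_gt_of_ne hne with hlt | hgt
      · -- z < v : apply extendability to (insert z (X.erase v), X)
        have hint : insert z (X.erase v) ∩ X = X.erase v := by
          ext x
          simp only [Finset.mem_inter, Finset.mem_insert, Finset.mem_erase]
          constructor
          · rintro ⟨rfl | ⟨hxv, hxX⟩, hxX'⟩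
            · exact absurd hxX' hzX
            · exact ⟨hxv, hxX⟩
          · rintro ⟨hxv, hxX⟩
            exact ⟨Or.inr ⟨hxv, hxX⟩, hxX⟩
        have hintcard : (insert z (X.erase v) ∩ X).card = k - 1 := by
          rw [hint, Finset.card_erase_of_mem hv, hXcard]
        have hcond1 : ∀ a ∈ insert z (X.erase v) \ X, ∀ x ∈ insert z (X.erase v) ∪ X,
            a ≠ x → a < x := by
          intro a ha x hx hax
          have haz : a = z := by
            rcases Finset.mem_insert.mp (Finset.mem_sdiff.mp ha).1 with rfl | h
            · rfl
            · exact absurd (Finset.mem_of_mem_erase h) (Finset.mem_sdiff.mp ha).2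
          subst haz
          rcases Finset.mem_union.mp hx with hx | hx
          · rcases Finset.mem_insert.mp hx with rfl | hx
            · exact absurd rfl hax
            · exact hzlt x hx
          · by_cases hxv : x = v
            · subst hxv; exact hlt
            · exact hzlt x (Finset.mem_erase.mpr ⟨hxv, hx⟩)
        have hcond2 : ∀ b ∈ X \ insert z (X.erase v), ∀ x ∈ insert z (X.erase v) ∪ X,
            x ≠ b → x < b := by
          intro b hb x hx hxb
          have hbv : b = v := by
            by_contra h
            exact (Finset.mem_sdiff.mp hb).2
              (Finset.mem_insert.mpr (Or.inr (Finset.mem_erase.mpr ⟨h, (Finset.mem_sdiff.mp hb).1⟩)))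
          subst hbv
          rcases Finset.mem_union.mp hx with hx | hx
          · rcases Finset.mem_insert.mp hx with rfl | hx
            · exact hlt
            · exact hvmax x (Finset.mem_of_mem_erase hx) (Finset.mem_erase.mp hx).1
          · exact hvmax x hx hxb
        have hU := hext (insert z (X.erase v)) X hcard1 hXcard hX1clique hX hintcard hcond1 hcond2
        have hvU : v ∈ insert z (X.erase v) ∪ X := Finset.mem_union_right _ hv
        have hzU : z ∈ insert z (X.erase v) ∪ X :=
          Finset.mem_union_left _ (Finset.mem_insert_self _ _)
        exact hU (by exact_mod_cast hvU) (by exact_mod_cast hzU) (Ne.symm hne)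
      · -- v < z : then X.erase v must be empty, so X = {v} and k = 1
        have hE : X.erase v = ∅ := by
          by_contra h
          obtain ⟨u, hu⟩ := Finset.nonempty_iff_ne_empty.mpr h
          have h1 : z < u := hzlt u hu
          have h2 : u < v := hvmax u (Finset.mem_of_mem_erase hu) (Finset.mem_erase.mp hu).1
          exact absurd (h1.trans h2) (not_lt.mpr hgt.le)
        have hXv : X = {v} := by
          rcases (Finset.erase_eq_empty_iff X v).mp hE with h | h
          · exact absurd hv (by simp [h])
          · exact h
        have hk1 : k = 1 := by rw [hXv] at hXcard; simpa using hXcard.symm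
        have hzclique : G.IsClique (({z} : Finset V) : Set V) := by
          simp [SimpleGraph.isClique_iff, Set.Pairwise]
        have hintcard : (X ∩ {z}).card = k - 1 := by
          have : X ∩ {z} = ∅ :=
            Finset.inter_singleton_of_notMem (by rw [hXv]; simpa using hne)
          rw [this, hk1]
          simp
        have hcond1 : ∀ a ∈ X \ {z}, ∀ x ∈ X ∪ {z}, a ≠ x → a < x := by
          intro a ha x hx hax
          have hav : a = v := by rw [hXv] at ha; simpa using (Finset.mem_sdiff.mp ha).1
          subst hav
          rcases Finset.mem_union.mp hx with hx | hx
          · rw [hXv] at hx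
            exact absurd (Finset.mem_singleton.mp hx).symm hax
          · rw [Finset.mem_singleton.mp hx]; exact hgt
        have hcond2 : ∀ b ∈ {z} \ X, ∀ x ∈ X ∪ {z}, x ≠ b → x < b := by
          intro b hb x hx hxb
          have hbz : b = z := by simpa using (Finset.mem_sdiff.mp hb).1
          subst hbz
          rcases Finset.mem_union.mp hx with hx | hx
          · rw [hXv] at hx
            rw [Finset.mem_singleton.mp hx]
            exact hgt
          · exact absurd (Finset.mem_singleton.mp hx) hxb
        have hU := hext X {z} hXcard (by simp [hk1]) hX hzclique hintcard hcond1 hcond2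
        have hvU : v ∈ X ∪ {z} := Finset.mem_union_left _ hv
        have hzU : z ∈ X ∪ {z} := Finset.mem_union_right _ (Finset.mem_singleton_self z)
        exact hU (by exact_mod_cast hvU) (by exact_mod_cast hzU) (Ne.symm hne)
  refine ⟨?_, ?_⟩
  · rw [Finset.coe_insert]
    exact hZ.insert fun z hz hne => hadj z hz (Ne.symm hne)
  · intro Y hY hYends
    by_cases hvZ : v ∈ Z
    · -- then X.erase v = ∅ and Y itself ends with X.erase v
      have hE : X.erase v = ∅ := by
        by_contra h
        obtain ⟨u, hu⟩ := Finset.nonempty_iff_ne_empty.mpr h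
        have h1 : v < u := hZends.2 v (Finset.mem_sdiff.mpr ⟨hvZ, Finset.notMem_erase v X⟩) u hu
        have h2 : u < v := hvmax u (Finset.mem_of_mem_erase hu) (Finset.mem_erase.mp hu).1
        exact absurd h1 (not_lt.mpr h2.le)
      have hYZ : Y.card ≤ Z.card := hZmax Y hY ⟨by simp [hE], by simp [hE]⟩
      exact hYZ.trans (Finset.card_le_card (Finset.subset_insert _ _))
    · have hvY : v ∈ Y := hYends.1 hv
      have hYe : EndsWith (Y.erase v) (X.erase v) := by
        constructor
        · intro u hu
          exact Finset.mem_erase.mpr ⟨(Finset.mem_erase.mp hu).1,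
            hYends.1 (Finset.mem_of_mem_erase hu)⟩
        · intro x hx u hu
          have hxY : x ∈ Y := Finset.mem_of_mem_erase (Finset.mem_sdiff.mp hx).1
          have hxv : x ≠ v := (Finset.mem_erase.mp (Finset.mem_sdiff.mp hx).1).1
          have hxX : x ∉ X := fun h =>
            (Finset.mem_sdiff.mp hx).2 (Finset.mem_erase.mpr ⟨hxv, h⟩)
          exact hYends.2 x (Finset.mem_sdiff.mpr ⟨hxY, hxX⟩) u (Finset.mem_of_mem_erase hu)
      have hYeC : G.IsClique ((Y.erase v : Finset V) : Set V) :=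
        hY.subset (by exact_mod_cast Finset.erase_subset v Y)
      have h1 := hZmax _ hYeC hYe
      rw [Finset.card_insert_of_notMem hvZ]
      have h2 := Finset.card_erase_of_mem hvY
      omega
end

section
/- A directed acyclic graph G is transitive if and only if every topological sort of G is a 2-clique extendable ordering of the underlying undirected graph of G. -/
/-!
If `E` is transitive, an undirected edge between `a` and `b` with `σ a < σ b` must be the
directed edge `E a b`, so two such edges along `a < b < c` compose to `E a c`. Conversely,
given a path `u → v → w`, take any topological sort `σ` (a linear extension of the
reachability order, which is a partial order because `E` is acyclic): clique extendability
yields an edge between `u` and `w`, and it cannot be `E w u` since `σ u < σ w`.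
-/

open Relation

theorem Finite.exists_strictMono_injective_nat (α : Type*) [PartialOrder α] [Finite α] :
    ∃ f : α → ℕ, StrictMono f ∧ Function.Injective f := by
  have : Finite (LinearExtension α) := ‹Finite α›
  have hcount : StrictMono fun a : LinearExtension α => (Set.Iio a).ncard :=
    Set.ncard_strictMono.comp fun _ _ => Set.Iio_ssubset_Iio
  -- `toLinearExtension` is the identity on the underlying type, so `hcount` also gives injectivity.
  refine ⟨fun a => (Set.Iio (toLinearExtension a)).ncard, fun a b hab => hcount ?_,
    fun a b h => hcount.injective h⟩
  exact lt_of_le_of_ne (toLinearExtension.monotone hab.le) hab.ne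

section Acyclic

variable {V : Type*} {E : V → V → Prop}

abbrev reachabilityOrder (hacyc : ∀ v, ¬ TransGen E v v) : PartialOrder V where
  le := ReflTransGen E
  le_refl _ := ReflTransGen.refl
  le_trans _ _ _ := ReflTransGen.trans
  le_antisymm a b hab hba := by
    rcases reflTransGen_iff_eq_or_transGen.mp hab with rfl | hab
    · rfl
    · exact (hacyc a (hab.trans_left hba)).elim

theorem exists_topologicalSort [Finite V] (hacyc : ∀ v, ¬ TransGen E v v) :
    ∃ σ : V → ℕ, Function.Injective σ ∧ ∀ u v, E u v → σ u < σ v := by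
  let _ := reachabilityOrder hacyc
  obtain ⟨σ, hmono, hinj⟩ := Finite.exists_strictMono_injective_nat V
  refine ⟨σ, hinj, fun u v huv => hmono (lt_of_le_of_ne (ReflTransGen.single huv) ?_)⟩
  rintro rfl
  exact hacyc u (TransGen.single huv)

theorem rel_of_rel_or_rel_of_lt {σ : V → ℕ} (hσ : ∀ u v, E u v → σ u < σ v) {a b : V}
    (hab : σ a < σ b) (hadj : E a b ∨ E b a) : E a b :=
  hadj.resolve_right fun hba => (hσ b a hba).asymm hab

end Acyclic

/-- A finite DAG is transitive iff every topological sort of it is a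
2-clique extendable ordering of its underlying undirected graph. -/
theorem transitive_iff_topo_sorts_two_clique_extendable
    {V : Type*} [Fintype V] (E : V → V → Prop)
    (hacyc : ∀ v, ¬ Relation.TransGen E v v) :
    (∀ u v w, E u v → E v w → E u w) ↔
      (∀ σ : V → ℕ, Function.Injective σ →
        (∀ u v, E u v → σ u < σ v) →
        ∀ a b c : V, σ a < σ b → σ b < σ c →
          (E a b ∨ E b a) → (E b c ∨ E c b) → (E a c ∨ E c a)) := by
  constructor
  · intro htrans σ _ hσ a b c hab hbc hadj₁ hadj₂
    exact Or.inl (htrans a b c (rel_of_rel_or_rel_of_lt hσ hab hadj₁)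
      (rel_of_rel_or_rel_of_lt hσ hbc hadj₂))
  · intro hext u v w huv hvw
    obtain ⟨σ, hinj, hσ⟩ := exists_topologicalSort hacyc
    have huw : σ u < σ w := (hσ u v huv).trans (hσ v w hvw)
    exact rel_of_rel_or_rel_of_lt hσ huw
      (hext σ hinj hσ u v w (hσ u v huv) (hσ v w hvw) (Or.inl huv) (Or.inl hvw))
end

section
/- Let G be a DAG with a satisfying utility function α for thresholds (t₁, t₂), t₁ > 0, and let X be an independent set in G. If k is a positive integer with k·t₁ > t₂, then X can be partitioned into at most k sets, each of whose α-values lie in a half-open interval of length t₁. Consequently, if Y maximizes |Y| over sets of vertices with α-values in an interval [x, x+t₁), then |X| ≤ k·|Y|. -/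
/-- Let `α` be a satisfying utility function for `(t₁, t₂)`, `t₁ > 0`, let
`X` be an independent set, and let `k` be a positive integer with
`k·t₁ > t₂`.  Then `X` can be partitioned into at most `k` classes, each of
whose `α`-values lie in a half-open interval of length `t₁`; consequently,
if `Y` has maximum cardinality among vertex sets whose `α`-values lie in a
half-open interval of length `t₁`, then `|X| ≤ k·|Y|`. -/
theorem independent_set_partition {V : Type*} [Fintype V] (E : V → V → Prop)
    (t₁ t₂ : ℝ) (ht₁ : 0 < t₁) (α : V → ℝ)
    (hedge : ∀ u v, E u v → α v - α u ≥ t₁)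
    (hhop : ∀ u v, u ≠ v → ¬ E u v → ¬ E v u → |α v - α u| ≤ t₂)
    (X : Finset V) (hX : ∀ u ∈ X, ∀ v ∈ X, u ≠ v → ¬ E u v)
    (k : ℕ) (hk : 0 < k) (hkt : (k : ℝ) * t₁ > t₂) :
    (∃ c : V → Fin k, ∀ i : Fin k, ∃ x : ℝ,
        ∀ v ∈ X, c v = i → α v ∈ Set.Ico x (x + t₁)) ∧
    (∀ (Y : Finset V) (x : ℝ),
        (∀ v ∈ Y, α v ∈ Set.Ico x (x + t₁)) →
        (∀ (Z : Finset V) (y : ℝ),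
          (∀ v ∈ Z, α v ∈ Set.Ico y (y + t₁)) → Z.card ≤ Y.card) →
        X.card ≤ k * Y.card) := by
  rcases X.eq_empty_or_nonempty with hXe | hXne
  · subst hXe
    refine ⟨⟨fun _ => ⟨0, hk⟩, fun i => ⟨0, fun v hv => absurd hv (Finset.notMem_empty v)⟩⟩,
      ?_⟩
    intro Y x hY hmax
    simp
  · obtain ⟨u, hu, hmin⟩ := X.exists_min_image α hXne
    have hbd : ∀ v ∈ X, α u ≤ α v ∧ α v - α u < (k : ℝ) * t₁ := by
      intro v hv
      refine ⟨hmin v hv, ?_⟩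
      by_cases hvu : v = u
      · subst hvu
        simpa using by positivity
      · have h1 := hX u hu v hv (Ne.symm hvu)
        have h2 := hX v hv u hu hvu
        have := hhop u v (Ne.symm hvu) h1 h2
        calc α v - α u ≤ |α v - α u| := le_abs_self _
          _ ≤ t₂ := this
          _ < (k : ℝ) * t₁ := hkt
    set c : V → Fin k := fun v => ⟨(⌊(α v - α u) / t₁⌋).toNat ⊓ (k - 1), by
      exact lt_of_le_of_lt (min_le_right _ _) (Nat.sub_lt hk one_pos)⟩ with hc
    have hclass : ∀ v ∈ X, α v ∈ Set.Ico (α u + (c v : ℕ) * t₁) (α u + (c v : ℕ) * t₁ + t₁) := by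
      intro v hv
      obtain ⟨h0, hlt⟩ := hbd v hv
      have hr0 : 0 ≤ (α v - α u) / t₁ := div_nonneg (by linarith) ht₁.le
      have hrk : (α v - α u) / t₁ < (k : ℝ) := by
        rw [div_lt_iff₀ ht₁]; linarith
      have hf0 : 0 ≤ ⌊(α v - α u) / t₁⌋ := Int.floor_nonneg.mpr hr0
      have hfk : ⌊(α v - α u) / t₁⌋ < (k : ℤ) := by
        have := Int.floor_le ((α v - α u) / t₁)
        have : (⌊(α v - α u) / t₁⌋ : ℝ) < (k : ℝ) := lt_of_le_of_lt this hrk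
        exact_mod_cast this
      have htn : (⌊(α v - α u) / t₁⌋).toNat < k := by omega
      have hcv : (c v : ℕ) = (⌊(α v - α u) / t₁⌋).toNat := by
        simp only [hc]
        exact min_eq_left (by omega)
      have hcvr : ((c v : ℕ) : ℝ) = (⌊(α v - α u) / t₁⌋ : ℝ) := by
        rw [hcv]
        exact_mod_cast (Int.toNat_of_nonneg hf0)
      constructor
      · have := Int.floor_le ((α v - α u) / t₁)
        rw [hcvr]
        have : (⌊(α v - α u) / t₁⌋ : ℝ) * t₁ ≤ α v - α u := by
          rw [← le_div_iff₀ ht₁]; exact this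
        linarith
      · have := Int.lt_floor_add_one ((α v - α u) / t₁)
        rw [hcvr]
        have : α v - α u < ((⌊(α v - α u) / t₁⌋ : ℝ) + 1) * t₁ := by
          rw [← div_lt_iff₀ ht₁]; exact this
        linarith
    constructor
    · exact ⟨c, fun i => ⟨α u + (i : ℕ) * t₁, fun v hv hvi => hvi ▸ hclass v hv⟩⟩
    · intro Y x hY hmax
      have hsum : X.card = ∑ i : Fin k, (X.filter (fun v => c v = i)).card :=
        Finset.card_eq_sum_card_fiberwise (fun v _ => Finset.mem_univ (c v))
      have hfib : ∀ i : Fin k, (X.filter (fun v => c v = i)).card ≤ Y.card := by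
        intro i
        refine hmax _ (α u + (i : ℕ) * t₁) ?_
        intro v hv
        rw [Finset.mem_filter] at hv
        exact hv.2 ▸ hclass v hv.1
      calc X.card = ∑ i : Fin k, (X.filter (fun v => c v = i)).card := hsum
        _ ≤ ∑ _i : Fin k, Y.card := Finset.sum_le_sum (fun i _ => hfib i)
        _ = k * Y.card := by simp [Finset.sum_const, mul_comm]
end

section
/- Let G be a DAG with a satisfying utility function α for thresholds (1, λ), let i ≥ 1 be an integer, and let G' be the subgraph of G keeping only edges (u,v) with α(v) - α(u) ≥ i. If K is a clique of G of size s, then G' contains a clique of size at least ⌈s / i⌉. -/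
/-!
Along the clique `K` the values of `α` are pairwise `1`-separated. Greedily keep the vertex of least
`α` and discard all vertices less than `i` above it: at most `i` vertices are discarded per kept
vertex, since distinct floors of `α - a` tell apart `1`-separated points of `[a, a + i)`. Kept
vertices are then pairwise at least `i` apart, and the edge of `K` between two of them points
upwards because `α` increases along edges.
-/

open Finset

section

variable {V : Type*}

lemma card_le_of_mapsTo_Ico_of_pairwise_one_le_abs_sub (f : V → ℝ) (K : Finset V) (a : ℝ) (i : ℕ)
    (hmaps : ∀ v ∈ K, f v ∈ Set.Ico a (a + i))
    (hsep : (K : Set V).Pairwise fun u v => 1 ≤ |f u - f v|) : #K ≤ i := by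
  have hfloor : Set.MapsTo (fun v => ⌊f v - a⌋) K (Ico (0 : ℤ) i) := by
    intro v hv
    obtain ⟨hlo, hhi⟩ := hmaps v hv
    simp only [coe_Ico, Set.mem_Ico, Int.floor_nonneg, Int.floor_lt, Int.cast_natCast]
    constructor <;> linarith
  have hinj : Set.InjOn (fun v => ⌊f v - a⌋) K := by
    intro u hu v hv huv
    by_contra hne
    have hclose := Int.abs_sub_lt_one_of_floor_eq_floor huv
    rw [sub_sub_sub_cancel_right] at hclose
    exact (hsep hu hv hne).not_gt hclose
  simpa using card_le_card_of_injOn _ hfloor hinj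

lemma exists_subset_pairwise_le_abs_sub_card_le_mul (f : V → ℝ) (i : ℕ) (hi : 1 ≤ i)
    (K : Finset V) (hsep : (K : Set V).Pairwise fun u v => 1 ≤ |f u - f v|) :
    ∃ K' ⊆ K, (K' : Set V).Pairwise (fun u v => (i : ℝ) ≤ |f u - f v|) ∧ #K ≤ i * #K' := by
  classical
  induction K using Finset.strongInduction with
  | H K ih =>
    rcases K.eq_empty_or_nonempty with rfl | hne
    · exact ⟨∅, by simp⟩
    obtain ⟨u, hu, hmin⟩ := K.exists_min_image f hne
    set far := K.filter fun v => f u + i ≤ f v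
    have hfar_sub : far ⊆ K := filter_subset _ _
    have hu_far : u ∉ far := by
      have : (0 : ℝ) < i := by exact_mod_cast hi
      simp only [far, mem_filter, not_and, not_le]
      exact fun _ => by linarith
    have hnear : #(K.filter fun v => ¬ f u + i ≤ f v) ≤ i := by
      refine card_le_of_mapsTo_Ico_of_pairwise_one_le_abs_sub f _ (f u) i ?_
        (hsep.mono (coe_subset.2 (filter_subset _ _)))
      intro v hv
      rw [mem_filter, not_le] at hv
      exact ⟨hmin v hv.1, hv.2⟩
    obtain ⟨K', hK'_sub, hK'_sep, hK'_card⟩ :=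
      ih far (ssubset_of_subset_of_ne hfar_sub fun h => hu_far (h ▸ hu))
        (hsep.mono (coe_subset.2 hfar_sub))
    refine ⟨insert u K', insert_subset hu (hK'_sub.trans hfar_sub), ?_, ?_⟩
    · have hgap : ∀ v ∈ K', (i : ℝ) ≤ |f u - f v| := fun v hv => by
        have hv := (mem_filter.1 (hK'_sub hv)).2
        rw [abs_sub_comm, abs_of_nonneg (by linarith)]
        linarith
      rw [coe_insert, Set.pairwise_insert]
      exact ⟨hK'_sep, fun v hv _ => ⟨hgap v hv, abs_sub_comm (f u) (f v) ▸ hgap v hv⟩⟩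
    · have hsplit := card_filter_add_card_filter_not (s := K) fun v => f u + i ≤ f v
      rw [card_insert_of_notMem fun h => hu_far (hK'_sub h)]
      nlinarith

end

theorem subgraph_clique_general {V : Type*} (E : V → V → Prop)
    (α : V → ℝ)
    (hedge : ∀ u v, E u v → α v - α u ≥ 1)
    (i : ℕ) (hi : 1 ≤ i)
    (K : Finset V) (hK : ∀ u ∈ K, ∀ v ∈ K, u ≠ v → E u v ∨ E v u) :
    ∃ K' : Finset V, K' ⊆ K ∧
      (∀ u ∈ K', ∀ v ∈ K', u ≠ v →
        (E u v ∧ α v - α u ≥ (i : ℝ)) ∨ (E v u ∧ α u - α v ≥ (i : ℝ))) ∧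
      (K.card : ℝ) / (i : ℝ) ≤ (K'.card : ℝ) := by
  have hedge_abs : ∀ u v, E u v → |α u - α v| = α v - α u := fun u v h => by
    rw [abs_sub_comm, abs_of_nonneg (by linarith [hedge u v h])]
  have hsep : (K : Set V).Pairwise fun u v => 1 ≤ |α u - α v| := fun u hu v hv huv => by
    rcases hK u hu v hv huv with h | h
    · exact (hedge u v h).trans_eq (hedge_abs u v h).symm
    · exact (hedge v u h).trans_eq (by rw [abs_sub_comm, hedge_abs v u h])
  obtain ⟨K', hK'_sub, hK'_sep, hK'_card⟩ :=
    exists_subset_pairwise_le_abs_sub_card_le_mul α i hi K hsep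
  refine ⟨K', hK'_sub, fun u hu v hv huv => ?_, ?_⟩
  · have hgap := hK'_sep hu hv huv
    rcases hK u (hK'_sub hu) v (hK'_sub hv) huv with h | h
    · exact Or.inl ⟨h, hgap.trans_eq (hedge_abs u v h)⟩
    · exact Or.inr ⟨h, hgap.trans_eq (by rw [abs_sub_comm, hedge_abs v u h])⟩
  · rw [div_le_iff₀ (by exact_mod_cast hi), mul_comm]
    exact_mod_cast hK'_card

/-- Let `α` be a satisfying utility function for a DAG `G` with thresholds
`(1, λ)`, let `i ≥ 1` be an integer, and let `G'` keep only the edges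
`(u,v)` of `G` with `α v - α u ≥ i`.  If `K` is a clique of `G` of size `s`,
then `G'` contains a clique of size at least `⌈s / i⌉`. -/
theorem subgraph_clique {V : Type*} (E : V → V → Prop)
    (lam : ℝ) (α : V → ℝ)
    (hedge : ∀ u v, E u v → α v - α u ≥ 1)
    (hhop : ∀ u v, u ≠ v → ¬ E u v → ¬ E v u → |α v - α u| ≤ lam)
    (i : ℕ) (hi : 1 ≤ i)
    (K : Finset V) (hK : ∀ u ∈ K, ∀ v ∈ K, u ≠ v → E u v ∨ E v u) :
    ∃ K' : Finset V, K' ⊆ K ∧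
      (∀ u ∈ K', ∀ v ∈ K', u ≠ v →
        (E u v ∧ α v - α u ≥ (i : ℝ)) ∨ (E v u ∧ α u - α v ≥ (i : ℝ))) ∧
      (K.card : ℝ) / (i : ℝ) ≤ (K'.card : ℝ) :=
  subgraph_clique_general E α hedge i hi K hK
end
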